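/- arXiv:1701.05937 — 2 statements merged into one kernel-verified Lean document; each statement's English description precedes it below -/
import Mathlib

section
/- Let (A, ⊗, 1) be a symmetric monoidal category with right-idempotent η : 1 → F. Then the functor F ⊗ − : A → (F ⊗ A), into the full subcategory of objects X with η ⊗ X an isomorphism, is left adjoint to the inclusion of F ⊗ A into A. -/
open CategoryTheory MonoidalCategory Limits

universe v u

variable {A : Type u} [Category.{v} A] [MonoidalCategory A]

/-- The morphism `X ⊗ η : X ⟶ X ⊗ G` (unitor isomorphisms inserted). -/
def lwhisk (X : A) {G : A} (η : 𝟙_ A ⟶ G) : X ⟶ X ⊗ G := (ρ_ X).inv ≫ X ◁ η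

/-- The morphism `η ⊗ X : X ⟶ G ⊗ X` (unitor isomorphisms inserted). -/
def rwhisk {G : A} (η : 𝟙_ A ⟶ G) (X : A) : X ⟶ G ⊗ X := (λ_ X).inv ≫ η ▷ X

/-- A right-idempotent: `F ⊗ η = η ⊗ F` is an isomorphism `F ≅ F ⊗ F`. -/
def IsRightIdem {F : A} (η : 𝟙_ A ⟶ F) : Prop :=
  lwhisk F η = rwhisk η F ∧ IsIso (lwhisk F η)

lemma rwhisk_natural {G : A} (η : 𝟙_ A ⟶ G) {X Y : A} (f : X ⟶ Y) :
    f ≫ rwhisk η Y = rwhisk η X ≫ G ◁ f := by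
  simp [rwhisk, ← whisker_exchange]

lemma rwhisk_tensor {F : A} (η : 𝟙_ A ⟶ F) (X : A) :
    rwhisk η (F ⊗ X) = rwhisk η F ▷ X ≫ (α_ F F X).hom := by
  simp [rwhisk, ← associator_naturality_left]

lemma lwhisk_tensor {F : A} (η : 𝟙_ A ⟶ F) (X : A) :
    F ◁ rwhisk η X = lwhisk F η ▷ X ≫ (α_ F F X).hom := by
  simp [rwhisk, lwhisk, ← associator_naturality_middle]

lemma key {F : A} {η : 𝟙_ A ⟶ F} (heq : lwhisk F η = rwhisk η F) (X : A) :
    F ◁ rwhisk η X = rwhisk η (F ⊗ X) := by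
  rw [lwhisk_tensor, rwhisk_tensor, heq]

/-- The counit component: the inverse of `rwhisk η Y.obj`. -/
noncomputable def counitApp {F : A} (η : 𝟙_ A ⟶ F)
    (Y : ObjectProperty.FullSubcategory (fun X : A => IsIso (rwhisk η X))) :
    (F ⊗ Y.obj : A) ⟶ Y.obj :=
  @inv A _ _ _ (rwhisk η Y.obj) Y.property

lemma counitApp_hom_inv {F : A} (η : 𝟙_ A ⟶ F)
    (Y : ObjectProperty.FullSubcategory (fun X : A => IsIso (rwhisk η X))) :
    rwhisk η Y.obj ≫ counitApp η Y = 𝟙 Y.obj :=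
  @IsIso.hom_inv_id A _ _ _ (rwhisk η Y.obj) Y.property

theorem stmt3 [SymmetricCategory A] {F : A} (η : 𝟙_ A ⟶ F) (h : IsRightIdem η) :
    ∃ L : A ⥤ ObjectProperty.FullSubcategory (fun X : A => IsIso (rwhisk η X)),
      Nonempty (L ⋙ ObjectProperty.ι _ ≅ tensorLeft F) ∧
        Nonempty (L ⊣ ObjectProperty.ι _) := by
  obtain ⟨heq, hiso⟩ := h
  haveI := hiso
  have hFX : ∀ X : A, IsIso (rwhisk η (F ⊗ X)) := fun X => by
    rw [rwhisk_tensor, ← heq]; infer_instance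
  refine ⟨{ obj := fun X => ⟨F ⊗ X, hFX X⟩, map := fun f => ObjectProperty.homMk (F ◁ f) }, ⟨?_⟩, ⟨?_⟩⟩
  · exact NatIso.ofComponents (fun X => Iso.refl _) (by intros; simp)
  · exact Adjunction.mkOfHomEquiv
      { homEquiv := fun X Y =>
          { toFun := fun f => rwhisk η X ≫ f.hom
            invFun := fun g => ObjectProperty.homMk
              ((F ◁ g) ≫ counitApp η Y : (F ⊗ X : A) ⟶ Y.obj)
            left_inv := fun f => by
              ext
              show F ◁ (rwhisk η X ≫ f.hom) ≫ counitApp η Y = f.hom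
              rw [MonoidalCategory.whiskerLeft_comp, key heq, Category.assoc,
                ← Category.assoc (rwhisk η (F ⊗ X)), ← rwhisk_natural η f.hom,
                Category.assoc, counitApp_hom_inv η Y, Category.comp_id]
            right_inv := fun g => by
              show rwhisk η X ≫ (F ◁ g) ≫ counitApp η Y = g
              rw [← Category.assoc, ← rwhisk_natural η g]
              show (g ≫ rwhisk η Y.obj) ≫ counitApp η Y = g
              rw [Category.assoc, counitApp_hom_inv η Y]
              exact Category.comp_id g }
        homEquiv_naturality_left_symm := fun {X' X Y} f g => by
          ext
          show F ◁ (f ≫ g) ≫ counitApp η Y = F ◁ f ≫ F ◁ g ≫ counitApp η Y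
          simp
        homEquiv_naturality_right := fun {X Y Y'} f g => by
          show rwhisk η X ≫ (f.hom ≫ g.hom) = (rwhisk η X ≫ f.hom) ≫ g.hom
          simp }
end

section
/- Let A be a Grothendieck abelian category with a symmetric monoidal structure (⊗, 1) such that ⊗ is additive in each variable and preserves coproducts in each variable. Then the isomorphism classes of flat right-idempotents η : 1 → F form a set (not a proper class). -/
open CategoryTheory MonoidalCategory Limits

universe v u

variable {A : Type u} [Category.{v} A] [MonoidalCategory A]

/-- An object `F` is flat if `F ⊗ −` is exact. -/
def IsFlat (F : A) : Prop :=
  Nonempty (PreservesFiniteLimits (tensorLeft F)) ∧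
    Nonempty (PreservesFiniteColimits (tensorLeft F))

section Aux

variable [Abelian A] [MonoidalPreadditive A]

/-- The set of subobjects `K ≤ G` with `F ⊗ (G/K) ≅ 0`. -/
def Sset (G F : A) : Set (Subobject G) :=
  {K | IsZero ((tensorLeft F).obj (cokernel K.arrow))}

lemma Sset_eq_of_iso (G : A) {F F' : A} (e : F ≅ F') : Sset G F = Sset G F' := by
  ext K
  constructor <;> intro h
  · exact h.of_iso (whiskerRightIso e.symm (cokernel K.arrow))
  · exact h.of_iso (whiskerRightIso e (cokernel K.arrow))

lemma tensor_isZero_of_subset [HasColimits A] {G : A} (hG : IsSeparator G)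
    (hcoprod : ∀ (X : A) (ι : Type v),
      Nonempty (PreservesColimitsOfShape (Discrete ι) (tensorLeft X)))
    {F F' : A} (hF : IsFlat F) (hF' : IsFlat F')
    (hS : Sset G F' ⊆ Sset G F) {X : A} (hX : IsZero ((tensorLeft F').obj X)) :
    IsZero ((tensorLeft F).obj X) := by
  letI := hF.1.some; letI := hF.2.some; letI := hF'.1.some; letI := hF'.2.some
  have hmap : ∀ f : G ⟶ X, (tensorLeft F).map f = 0 := by
    intro f
    have h1 : IsZero ((tensorLeft F').obj (Abelian.coimage f)) :=
      IsZero.of_mono ((tensorLeft F').map (Abelian.factorThruCoimage f)) hX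
    have cokIso : cokernel (kernelSubobject f).arrow ≅ Abelian.coimage f :=
      cokernel.mapIso _ _ (kernelSubobjectIso f) (Iso.refl G) (by simp)
    have h2 : kernelSubobject f ∈ Sset G F' :=
      h1.of_iso ((tensorLeft F').mapIso cokIso)
    have h4 : IsZero ((tensorLeft F).obj (Abelian.coimage f)) :=
      (hS h2).of_iso ((tensorLeft F).mapIso cokIso).symm
    rw [← Abelian.coimage.fac f, Functor.map_comp,
      h4.eq_zero_of_src ((tensorLeft F).map (Abelian.factorThruCoimage f)), comp_zero]
  letI : PreservesColimitsOfShape (Discrete (G ⟶ X)) (tensorLeft F) := (hcoprod F (G ⟶ X)).some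
  have he : Epi (Limits.Sigma.desc fun f : G ⟶ X => f) := (isSeparator_iff_epi G).mp hG X
  have hmapepi : Epi ((tensorLeft F).map (Limits.Sigma.desc fun f : G ⟶ X => f)) :=
    (tensorLeft F).map_epi _
  have hzero : (tensorLeft F).map (Limits.Sigma.desc fun f : G ⟶ X => f) = 0 := by
    apply (isColimitOfPreserves (tensorLeft F)
      (colimit.isColimit (Discrete.functor fun _ : G ⟶ X => G))).hom_ext
    intro j
    simp only [Functor.mapCocone_ι_app, comp_zero, colimit.cocone_ι]
    rw [← Functor.map_comp]
    have h5 : colimit.ι (Discrete.functor fun _ : G ⟶ X => G) j ≫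
        (Limits.Sigma.desc fun f : G ⟶ X => f) = j.as := Limits.Sigma.ι_desc _ j.as
    rw [h5, hmap j.as]
  rw [IsZero.iff_id_eq_zero,
    ← cancel_epi ((tensorLeft F).map (Limits.Sigma.desc fun f : G ⟶ X => f)), hzero]
  simp

/-- If `F` kills the kernel and cokernel of `η'`, then `F ◁ η'` is an isomorphism. -/
lemma isIso_whiskerLeft_of_isZero {F F' : A} (hF : IsFlat F) (η' : 𝟙_ A ⟶ F')
    (hker : IsZero ((tensorLeft F).obj (kernel η')))
    (hcok : IsZero ((tensorLeft F).obj (cokernel η'))) :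
    IsIso (F ◁ η') := by
  letI := hF.1.some; letI := hF.2.some
  have h1 : IsZero (kernel ((tensorLeft F).map η')) :=
    hker.of_iso (PreservesKernel.iso (tensorLeft F) η').symm
  have h2 : IsZero (cokernel ((tensorLeft F).map η')) :=
    hcok.of_iso (PreservesCokernel.iso (tensorLeft F) η').symm
  have hm : Mono ((tensorLeft F).map η') :=
    Abelian.mono_of_kernel_ι_eq_zero _ (h1.eq_zero_of_src _)
  have he : Epi ((tensorLeft F).map η') :=
    Abelian.epi_of_cokernel_π_eq_zero _ (h2.eq_zero_of_tgt _)
  exact isIso_of_mono_of_epi ((tensorLeft F).map η')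

/-- A flat right-idempotent kills its own kernel. -/
lemma isZero_tensor_kernel_self {F : A} (hF : IsFlat F) (η : 𝟙_ A ⟶ F)
    (hη : IsIso (lwhisk F η)) : IsZero ((tensorLeft F).obj (kernel η)) := by
  letI := hF.1.some
  have hiso : IsIso (F ◁ η) := by
    have : F ◁ η = (ρ_ F).hom ≫ lwhisk F η := by simp [lwhisk]
    rw [this]; infer_instance
  haveI : Mono ((tensorLeft F).map η) := by
    have : (tensorLeft F).map η = F ◁ η := rfl
    rw [this]; infer_instance
  exact (IsZero.of_iso (isZero_zero A) (kernel.ofMono ((tensorLeft F).map η))).of_iso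
    (PreservesKernel.iso (tensorLeft F) η)

/-- A flat right-idempotent kills its own cokernel. -/
lemma isZero_tensor_cokernel_self {F : A} (hF : IsFlat F) (η : 𝟙_ A ⟶ F)
    (hη : IsIso (lwhisk F η)) : IsZero ((tensorLeft F).obj (cokernel η)) := by
  letI := hF.2.some
  have hiso : IsIso (F ◁ η) := by
    have : F ◁ η = (ρ_ F).hom ≫ lwhisk F η := by simp [lwhisk]
    rw [this]; infer_instance
  haveI : Epi ((tensorLeft F).map η) := by
    have : (tensorLeft F).map η = F ◁ η := rfl
    rw [this]; infer_instance
  exact (IsZero.of_iso (isZero_zero A) (cokernel.ofEpi ((tensorLeft F).map η))).of_iso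
    (PreservesCokernel.iso (tensorLeft F) η)

end Aux

lemma whisk_comm {F F' : A} (η : 𝟙_ A ⟶ F) (η' : 𝟙_ A ⟶ F') :
    η ≫ lwhisk F η' = η' ≫ rwhisk η F' := by
  rw [lwhisk, rwhisk, rightUnitor_inv_naturality_assoc, leftUnitor_inv_naturality_assoc,
    ← whisker_exchange, unitors_inv_equal]

lemma isIso_whiskerRight_of_braided [BraidedCategory A] {F F' : A} (η : 𝟙_ A ⟶ F)
    (h : IsIso (F' ◁ η)) : IsIso (η ▷ F') := by
  have : η ▷ F' = ((β_ (𝟙_ A) F').hom ≫ (F' ◁ η)) ≫ (β_ F F').inv := by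
    rw [Iso.eq_comp_inv]
    exact BraidedCategory.braiding_naturality_left η F'
  rw [this]; infer_instance

theorem stmt16 [Abelian A] [MonoidalPreadditive A] [SymmetricCategory A]
    [HasColimits A] [HasFilteredColimits A] [AB5 A] (G : A) (hG : IsSeparator G)
    (hcoprod : ∀ (X : A) (ι : Type v),
      Nonempty (PreservesColimitsOfShape (Discrete ι) (tensorLeft X))) :
    Small.{v} (Quot (fun (p q : Σ F : A, {η : 𝟙_ A ⟶ F // IsFlat F ∧ IsIso (lwhisk F η)}) =>
      ∃ e : p.1 ≅ q.1, p.2.1 ≫ e.hom = q.2.1)) := by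
  haveI : WellPowered.{v} A := wellPowered_of_isDetector G hG.isDetector
  set r : (Σ F : A, {η : 𝟙_ A ⟶ F // IsFlat F ∧ IsIso (lwhisk F η)}) →
      (Σ F : A, {η : 𝟙_ A ⟶ F // IsFlat F ∧ IsIso (lwhisk F η)}) → Prop :=
    fun p q => ∃ e : p.1 ≅ q.1, p.2.1 ≫ e.hom = q.2.1 with hr
  have hsound : ∀ p q, r p q → Sset G p.1 = Sset G q.1 := by
    rintro p q ⟨e, -⟩
    exact Sset_eq_of_iso G e
  refine small_of_injective (f := Quot.lift (fun p => Sset G p.1) hsound) ?_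
  intro a b hab
  obtain ⟨⟨F, η, hF, hη⟩, rfl⟩ := Quot.exists_rep a
  obtain ⟨⟨F', η', hF', hη'⟩, rfl⟩ := Quot.exists_rep b
  apply Quot.sound
  have h : Sset G F = Sset G F' := hab
  -- `F` kills kernel and cokernel of `η'`
  have hk' : IsZero ((tensorLeft F).obj (kernel η')) :=
    tensor_isZero_of_subset hG hcoprod hF hF' h.symm.le
      (isZero_tensor_kernel_self hF' η' hη')
  have hc' : IsZero ((tensorLeft F).obj (cokernel η')) :=
    tensor_isZero_of_subset hG hcoprod hF hF' h.symm.le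
      (isZero_tensor_cokernel_self hF' η' hη')
  have hiso1 : IsIso (F ◁ η') := isIso_whiskerLeft_of_isZero hF η' hk' hc'
  -- `F'` kills kernel and cokernel of `η`
  have hk : IsZero ((tensorLeft F').obj (kernel η)) :=
    tensor_isZero_of_subset hG hcoprod hF' hF h.le
      (isZero_tensor_kernel_self hF η hη)
  have hc : IsZero ((tensorLeft F').obj (cokernel η)) :=
    tensor_isZero_of_subset hG hcoprod hF' hF h.le
      (isZero_tensor_cokernel_self hF η hη)
  have hiso2 : IsIso (F' ◁ η) := isIso_whiskerLeft_of_isZero hF' η hk hc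
  have hiso3 : IsIso (η ▷ F') := isIso_whiskerRight_of_braided η hiso2
  haveI : IsIso (lwhisk F η') := by
    rw [lwhisk]; exact inferInstance
  haveI : IsIso (rwhisk η F') := by
    rw [rwhisk]; exact inferInstance
  refine ⟨asIso (lwhisk F η') ≪≫ (asIso (rwhisk η F')).symm, ?_⟩
  simp only [Iso.trans_hom, asIso_hom, Iso.symm_hom, asIso_inv, ← Category.assoc]
  rw [whisk_comm η η']
  simp
end
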